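/- arXiv:1603.09448 — 4 statements merged into one kernel-verified Lean document; each statement's English description precedes it below -/
import Mathlib

section
/- Let F₁ be a VCP3 set of G₁ = (V₁, E₁) and F₂ a VCP3 set of G₂ = (V₂, E₂), where V₁ ∩ V₂ = X, E₁ ∩ E₂ = ∅, F₁ ∩ X = F₂ ∩ X, and for every vertex v ∈ X \ F₁, the sum of the degrees of v in G₁[V₁ \ F₁] and G₂[V₂ \ F₂] is at most 1. Then F₁ ∪ F₂ is a VCP3 set of the union graph G = (V₁ ∪ V₂, E₁ ∪ E₂). -/
/-- Join-node correctness: gluing VCP3 sets `F₁`, `F₂` of edge-disjoint graphs `G₁`, `G₂`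
(with supports in `V₁`, `V₂`, `V₁ ∩ V₂ = X`, `F₁ ∩ X = F₂ ∩ X`, and for every
`v ∈ X \ F₁` the degrees of `v` in `G₁[V₁ \ F₁]` and `G₂[V₂ \ F₂]` sum to at most 1)
yields a VCP3 set `F₁ ∪ F₂` of the union graph. -/
theorem stmt3 {V : Type*} [Fintype V] (G₁ G₂ : SimpleGraph V)
    (V₁ V₂ F₁ F₂ : Set V)
    (hG₁ : ∀ u v, G₁.Adj u v → u ∈ V₁ ∧ v ∈ V₁)
    (hG₂ : ∀ u v, G₂.Adj u v → u ∈ V₂ ∧ v ∈ V₂)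
    (hdisj : ∀ u v, ¬(G₁.Adj u v ∧ G₂.Adj u v))
    (hF₁ : F₁ ⊆ V₁) (hF₂ : F₂ ⊆ V₂)
    (hX : F₁ ∩ (V₁ ∩ V₂) = F₂ ∩ (V₁ ∩ V₂))
    -- F₁ is a VCP3 set of G₁ = (V₁, E₁)
    (hvc₁ : ∀ v ∈ V₁ \ F₁, ∀ a ∈ V₁ \ F₁, ∀ b ∈ V₁ \ F₁,
      G₁.Adj v a → G₁.Adj v b → a = b)
    -- F₂ is a VCP3 set of G₂ = (V₂, E₂)
    (hvc₂ : ∀ v ∈ V₂ \ F₂, ∀ a ∈ V₂ \ F₂, ∀ b ∈ V₂ \ F₂,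
      G₂.Adj v a → G₂.Adj v b → a = b)
    -- for every v ∈ X \ F₁ the degrees of v in G₁[V₁ \ F₁] and G₂[V₂ \ F₂] sum to ≤ 1
    (hdeg : ∀ v ∈ (V₁ ∩ V₂) \ F₁, ∀ a b : V,
      ((a ∈ V₁ \ F₁ ∧ G₁.Adj v a) ∨ (a ∈ V₂ \ F₂ ∧ G₂.Adj v a)) →
      ((b ∈ V₁ \ F₁ ∧ G₁.Adj v b) ∨ (b ∈ V₂ \ F₂ ∧ G₂.Adj v b)) → a = b) :
    ∀ v ∈ (V₁ ∪ V₂) \ (F₁ ∪ F₂), ∀ a ∈ (V₁ ∪ V₂) \ (F₁ ∪ F₂),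
      ∀ b ∈ (V₁ ∪ V₂) \ (F₁ ∪ F₂),
      (G₁ ⊔ G₂).Adj v a → (G₁ ⊔ G₂).Adj v b → a = b := by
  intro v hv a ha b hb hva hvb
  simp only [Set.mem_diff, Set.mem_union, not_or] at hv ha hb
  obtain ⟨_, hvF₁, hvF₂⟩ := hv
  obtain ⟨_, haF₁, haF₂⟩ := ha
  obtain ⟨_, hbF₁, hbF₂⟩ := hb
  cases hva with
  | inl h1 =>
    cases hvb with
    | inl h2 =>
      exact hvc₁ v ⟨(hG₁ _ _ h1).1, hvF₁⟩ a ⟨(hG₁ _ _ h1).2, haF₁⟩ b ⟨(hG₁ _ _ h2).2, hbF₁⟩ h1 h2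
    | inr h2 =>
      exact hdeg v ⟨⟨(hG₁ _ _ h1).1, (hG₂ _ _ h2).1⟩, hvF₁⟩ a b
        (Or.inl ⟨⟨(hG₁ _ _ h1).2, haF₁⟩, h1⟩) (Or.inr ⟨⟨(hG₂ _ _ h2).2, hbF₂⟩, h2⟩)
  | inr h1 =>
    cases hvb with
    | inl h2 =>
      exact hdeg v ⟨⟨(hG₁ _ _ h2).1, (hG₂ _ _ h1).1⟩, hvF₁⟩ a b
        (Or.inr ⟨⟨(hG₂ _ _ h1).2, haF₂⟩, h1⟩) (Or.inl ⟨⟨(hG₁ _ _ h2).2, hbF₁⟩, h2⟩)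
    | inr h2 =>
      exact hvc₂ v ⟨(hG₂ _ _ h1).1, hvF₂⟩ a ⟨(hG₂ _ _ h1).2, haF₂⟩ b ⟨(hG₂ _ _ h2).2, hbF₂⟩ h1 h2
end

section
/- Let F be a subset of the vertices of a graph G such that the induced subgraph G[F] has exactly c connected components, and fix a vertex v₁ ∈ F. Then the number of consistent cuts (F¹, F²) of F with v₁ ∈ F¹ equals 2^{c−1}. -/
/-!
A consistent cut of `F` is determined by which connected components of `G[F]` lie in `F¹`, and
every set of components arises this way. So the consistent cuts with `v₁ ∈ F¹` correspond to the
sets of components containing the component of `v₁`, of which there are `2^(c-1)`.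
-/

def Set.containingEquiv {α : Type*} (a : α) : {S : Set α // a ∈ S} ≃ Set {x // x ≠ a} where
  toFun S := Subtype.val ⁻¹' S.1
  invFun T := ⟨insert a (Subtype.val '' T), Set.mem_insert a _⟩
  left_inv S := by
    ext x
    by_cases hx : x = a
    · subst hx; simpa using S.2
    · simp [hx]
  right_inv T := by
    ext ⟨x, hx⟩
    simp [hx]

theorem Set.ncard_setOf_mem {α : Type*} [Finite α] (a : α) :
    {S : Set α | a ∈ S}.ncard = 2 ^ (Nat.card α - 1) := by
  have := Fintype.ofFinite α
  classical
  rw [← Nat.card_coe_set_eq, Set.coe_ofPred, Nat.card_congr (Set.containingEquiv a)]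
  simp [Nat.card_eq_fintype_card, Fintype.card_set, Fintype.card_subtype_compl]

namespace SimpleGraph

variable {V : Type*}

theorem preimage_image_connectedComponentMk {H : SimpleGraph V} {A : Set V}
    (hA : ∀ u v, H.Adj u v → u ∈ A → v ∈ A) :
    H.connectedComponentMk ⁻¹' (H.connectedComponentMk '' A) = A := by
  refine subset_antisymm ?_ (Set.subset_preimage_image _ _)
  rintro v ⟨u, hu, huv⟩
  by_contra hv
  obtain ⟨p⟩ := ConnectedComponent.exact huv
  obtain ⟨d, -, hd, hd'⟩ := p.exists_boundary_dart A hu hv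
  exact hd' (hA _ _ d.adj hd)

variable (G : SimpleGraph V) (F : Set V)

def IsConsistentCut (p : Set V × Set V) : Prop :=
  p.1 ∩ p.2 = ∅ ∧ p.1 ∪ p.2 = F ∧ ∀ u ∈ p.1, ∀ v ∈ p.2, ¬ G.Adj u v

def componentCut (S : Set (G.induce F).ConnectedComponent) : Set V × Set V :=
  ({v | ∃ h : v ∈ F, (G.induce F).connectedComponentMk ⟨v, h⟩ ∈ S},
    {v | ∃ h : v ∈ F, (G.induce F).connectedComponentMk ⟨v, h⟩ ∉ S})

theorem componentCut_injective : Function.Injective (componentCut G F) := by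
  intro S T h
  ext C
  induction C using ConnectedComponent.ind with | h v =>
  simpa [componentCut, v.2] using congrArg ((v : V) ∈ ·.1) h

theorem isConsistentCut_componentCut (S : Set (G.induce F).ConnectedComponent) :
    IsConsistentCut G F (componentCut G F S) := by
  refine ⟨?_, ?_, ?_⟩
  · ext v
    simp +contextual [componentCut]
  · ext v
    by_cases hv : v ∈ F <;> simp [componentCut, hv, em]
  · rintro u ⟨hu, huS⟩ v ⟨hv, hvS⟩ huv
    have huv' : (G.induce F).Adj ⟨u, hu⟩ ⟨v, hv⟩ := huv
    exact hvS (ConnectedComponent.sound huv'.reachable ▸ huS)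

theorem IsConsistentCut.eq_componentCut {p : Set V × Set V} (hp : IsConsistentCut G F p) :
    componentCut G F ((G.induce F).connectedComponentMk '' (Subtype.val ⁻¹' p.1)) = p := by
  obtain ⟨hdisj, hunion, hadj⟩ := hp
  have hp1 : p.1 ⊆ F := hunion ▸ Set.subset_union_left
  have hp2 : p.2 = F \ p.1 := by
    rw [← hunion, Set.union_sdiff_left,
      sdiff_eq_left.mpr (Set.disjoint_iff_inter_eq_empty.mpr hdisj).symm]
  have hclosed (u v : F) (huv : (G.induce F).Adj u v) (hu : (u : V) ∈ p.1) : (v : V) ∈ p.1 := by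
    have : (v : V) ∈ p.1 ∪ p.2 := hunion ▸ v.2
    exact this.resolve_right (hadj _ hu _ · huv)
  have hmem (v : V) (hv : v ∈ F) :
      (G.induce F).connectedComponentMk ⟨v, hv⟩ ∈
        (G.induce F).connectedComponentMk '' (Subtype.val ⁻¹' p.1) ↔ v ∈ p.1 :=
    Set.ext_iff.mp (preimage_image_connectedComponentMk hclosed) ⟨v, hv⟩
  ext v
  · simpa [componentCut, hmem] using fun h => hp1 h
  · simp [componentCut, hmem, hp2]

theorem setOf_isConsistentCut_and_mem_eq_image {v₁ : V} (hv₁ : v₁ ∈ F) :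
    {p | IsConsistentCut G F p ∧ v₁ ∈ p.1} =
      componentCut G F '' {S | (G.induce F).connectedComponentMk ⟨v₁, hv₁⟩ ∈ S} := by
  ext p
  constructor
  · rintro ⟨hp, hv⟩
    exact ⟨_, Set.mem_image_of_mem _ (show ⟨v₁, hv₁⟩ ∈ Subtype.val ⁻¹' p.1 from hv),
      hp.eq_componentCut⟩
  · rintro ⟨S, hS, rfl⟩
    exact ⟨isConsistentCut_componentCut G F S, hv₁, hS⟩

end SimpleGraph

open SimpleGraph

/-- If `G[F]` has exactly `c` connected components and `v₁ ∈ F`, then the number of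
consistent cuts `(F¹, F²)` of `F` with `v₁ ∈ F¹` equals `2^(c-1)`. -/
theorem stmt5 {V : Type*} [Fintype V] (G : SimpleGraph V) (F : Set V)
    (v₁ : V) (hv₁ : v₁ ∈ F) (c : ℕ)
    (hc : Nat.card (G.induce F).ConnectedComponent = c) :
    Set.ncard {p : Set V × Set V |
      p.1 ∩ p.2 = ∅ ∧ p.1 ∪ p.2 = F ∧
      (∀ u ∈ p.1, ∀ v ∈ p.2, ¬ G.Adj u v) ∧ v₁ ∈ p.1} = 2 ^ (c - 1) := by
  have hcuts : {p : Set V × Set V |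
      p.1 ∩ p.2 = ∅ ∧ p.1 ∪ p.2 = F ∧ (∀ u ∈ p.1, ∀ v ∈ p.2, ¬ G.Adj u v) ∧ v₁ ∈ p.1} =
      {p | IsConsistentCut G F p ∧ v₁ ∈ p.1} := by
    simp only [IsConsistentCut, and_assoc]
  rw [hcuts, setOf_isConsistentCut_and_mem_eq_image G F hv₁,
    Set.ncard_image_of_injective _ (componentCut_injective G F), Set.ncard_setOf_mem, hc]
end

section
/- Let F be a nonempty subset of vertices of a graph G with v₁ ∈ F. The number of consistent cuts (F¹, F²) of F with v₁ ∈ F¹ is odd if and only if G[F] is connected. -/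
/-- For `v₁ ∈ F`, the number of consistent cuts `(F¹, F²)` of `F` with `v₁ ∈ F¹`
is odd iff `G[F]` is connected. -/
theorem stmt6 {V : Type*} [Fintype V] (G : SimpleGraph V) (F : Set V)
    (v₁ : V) (hv₁ : v₁ ∈ F) :
    Odd (Set.ncard {p : Set V × Set V |
      p.1 ∩ p.2 = ∅ ∧ p.1 ∪ p.2 = F ∧
      (∀ u ∈ p.1, ∀ v ∈ p.2, ¬ G.Adj u v) ∧ v₁ ∈ p.1}) ↔
    (G.induce F).Connected := by
  classical
  set H := G.induce F with hH
  set S : Set (Set V × Set V) := {p : Set V × Set V |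
      p.1 ∩ p.2 = ∅ ∧ p.1 ∪ p.2 = F ∧
      (∀ u ∈ p.1, ∀ v ∈ p.2, ¬ G.Adj u v) ∧ v₁ ∈ p.1} with hSdef
  set c₀ : H.ConnectedComponent := H.connectedComponentMk ⟨v₁, hv₁⟩ with hc₀
  -- membership of elements of F in one of the two sides
  have hmemside : ∀ p ∈ S, ∀ w : F, (w : V) ∈ p.1 ∨ (w : V) ∈ p.2 := by
    rintro p ⟨h1, h2, h3, h4⟩ w
    have : (w : V) ∈ p.1 ∪ p.2 := by rw [h2]; exact w.2
    exact this
  have hnot2 : ∀ p ∈ S, ∀ w : V, w ∈ p.1 → w ∉ p.2 := by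
    rintro p ⟨h1, h2, h3, h4⟩ w hw1 hw2
    have : w ∈ p.1 ∩ p.2 := ⟨hw1, hw2⟩
    rw [h1] at this
    exact this
  -- adjacency step of consistency
  have hadj : ∀ p ∈ S, ∀ u v : F, H.Adj u v → ((u : V) ∈ p.1 ↔ (v : V) ∈ p.1) := by
    intro p hp u v huv
    obtain ⟨h1, h2, h3, h4⟩ := hp
    have hGuv : G.Adj (u : V) (v : V) := huv
    constructor
    · intro hu
      rcases hmemside p ⟨h1, h2, h3, h4⟩ v with hv | hv
      · exact hv
      · exact absurd hGuv (h3 _ hu _ hv)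
    · intro hv
      rcases hmemside p ⟨h1, h2, h3, h4⟩ u with hu | hu
      · exact hu
      · exact absurd hGuv.symm (h3 _ hv _ hu)
  -- consistency along reachability
  have hcons : ∀ p ∈ S, ∀ u v : F, H.Reachable u v →
      ((u : V) ∈ p.1 ↔ (v : V) ∈ p.1) := by
    rintro p hp u v ⟨w⟩
    induction w with
    | nil => rfl
    | cons h w ih => exact (hadj p hp _ _ h).trans ih
  -- the map from sets of components (≠ c₀) to cuts
  set A : Set {c : H.ConnectedComponent // c ≠ c₀} → Set V := fun T =>
    {v : V | ∃ h : v ∈ F, H.connectedComponentMk ⟨v, h⟩ = c₀ ∨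
      ∃ hc : H.connectedComponentMk ⟨v, h⟩ ≠ c₀,
        (⟨H.connectedComponentMk ⟨v, h⟩, hc⟩ : {c // c ≠ c₀}) ∈ T} with hA
  have hAsub : ∀ T, A T ⊆ F := by rintro T v ⟨h, _⟩; exact h
  have hgmem : ∀ T, (A T, F \ A T) ∈ S := by
    intro T
    refine ⟨Set.inter_diff_self _ _, Set.union_diff_cancel (hAsub T), ?_, ⟨hv₁, Or.inl rfl⟩⟩
    · rintro u hu v ⟨hvF, hv⟩ hadjuv
      have huF : u ∈ F := hAsub T hu
      have hHuv : H.Adj ⟨u, huF⟩ ⟨v, hvF⟩ := hadjuv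
      have hmk : H.connectedComponentMk ⟨u, huF⟩ = H.connectedComponentMk ⟨v, hvF⟩ :=
        SimpleGraph.ConnectedComponent.connectedComponentMk_eq_of_adj hHuv
      obtain ⟨h, hor⟩ := hu
      have h' : H.connectedComponentMk ⟨u, h⟩ = H.connectedComponentMk ⟨v, hvF⟩ := hmk
      apply hv
      refine ⟨hvF, ?_⟩
      rw [← h']
      exact hor
  -- the map is injective
  have hinj : Function.Injective (fun T => ((A T, F \ A T) : Set V × Set V)) := by
    intro T T' hTT'
    have hAeq : A T = A T' := congrArg Prod.fst hTT'
    ext c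
    obtain ⟨u, hu⟩ := c.1.exists_rep
    have hne : H.connectedComponentMk u ≠ c₀ := by rw [show H.connectedComponentMk u = c.1 from hu]; exact c.2
    have key : ∀ T'', c ∈ T'' ↔ (u : V) ∈ A T'' := by
      intro T''
      constructor
      · intro hc
        have hmku : H.connectedComponentMk ⟨(u : V), u.2⟩ = c.1 := hu
        refine ⟨u.2, Or.inr ⟨by rw [hmku]; exact c.2, ?_⟩⟩
        have he : (⟨H.connectedComponentMk ⟨(u : V), u.2⟩, by rw [hmku]; exact c.2⟩ :
            {c // c ≠ c₀}) = c := Subtype.ext hmku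
        rw [he]
        exact hc
      · rintro ⟨h, hor⟩
        have hmk : H.connectedComponentMk ⟨(u : V), h⟩ = c.1 := by
          rw [← hu]; congr 1
        rcases hor with hc | ⟨hc, hmem⟩
        · exact absurd (hmk.symm.trans hc) c.2
        · convert hmem using 1
          exact Subtype.ext hmk.symm
    rw [key T, key T', hAeq]
  -- the map is surjective onto S
  have hsurj : ∀ p ∈ S, ∃ T, ((A T, F \ A T) : Set V × Set V) = p := by
    intro p hp
    obtain ⟨h1, h2, h3, h4⟩ := hp
    refine ⟨{c | ∀ u : F, H.connectedComponentMk u = c.1 → (u : V) ∈ p.1}, ?_⟩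
    have hA1 : A {c | ∀ u : F, H.connectedComponentMk u = c.1 → (u : V) ∈ p.1} = p.1 := by
      ext v
      constructor
      · rintro ⟨h, hor⟩
        rcases hor with hc | ⟨hc, hmem⟩
        · have hreach : H.Reachable ⟨v, h⟩ ⟨v₁, hv₁⟩ :=
            SimpleGraph.ConnectedComponent.exact hc
          exact (hcons p ⟨h1, h2, h3, h4⟩ _ _ hreach).mpr h4
        · exact hmem ⟨v, h⟩ rfl
      · intro hv
        have h : v ∈ F := by rw [← h2]; exact Or.inl hv
        refine ⟨h, ?_⟩
        by_cases hc : H.connectedComponentMk ⟨v, h⟩ = c₀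
        · exact Or.inl hc
        · refine Or.inr ⟨hc, ?_⟩
          intro u hu
          have hreach : H.Reachable u ⟨v, h⟩ :=
            SimpleGraph.ConnectedComponent.exact hu
          exact (hcons p ⟨h1, h2, h3, h4⟩ _ _ hreach).mpr hv
    have hp2 : p.2 = F \ p.1 := by
      ext v
      constructor
      · intro hv
        refine ⟨by rw [← h2]; exact Or.inr hv, fun hv1 => ?_⟩
        have : v ∈ p.1 ∩ p.2 := ⟨hv1, hv⟩
        rw [h1] at this; exact this
      · rintro ⟨hvF, hv1⟩
        have : v ∈ p.1 ∪ p.2 := by rw [h2]; exact hvF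
        rcases this with h | h
        · exact absurd h hv1
        · exact h
    rw [hA1, ← hp2]
  -- count
  have hfin : Finite ↥F := Subtype.finite
  have hfinC : Finite H.ConnectedComponent := Quot.finite _
  haveI : Fintype {c : H.ConnectedComponent // c ≠ c₀} := Fintype.ofFinite _
  have hcard : Set.ncard S = 2 ^ Fintype.card {c : H.ConnectedComponent // c ≠ c₀} := by
    rw [← Nat.card_coe_set_eq]
    have hbij : Function.Bijective
        (fun T : Set {c : H.ConnectedComponent // c ≠ c₀} =>
          (⟨(A T, F \ A T), hgmem T⟩ : ↥S)) := by
      constructor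
      · intro T T' h
        exact hinj (congrArg Subtype.val h)
      · rintro ⟨p, hp⟩
        obtain ⟨T, hT⟩ := hsurj p hp
        exact ⟨T, Subtype.ext hT⟩
    rw [← Nat.card_eq_of_bijective _ hbij]
    simp [Nat.card_eq_fintype_card, Fintype.card_set]
  rw [hcard]
  rw [Nat.odd_iff, Nat.pow_mod]
  constructor
  · intro hodd
    -- card must be 0
    have hzero : Fintype.card {c : H.ConnectedComponent // c ≠ c₀} = 0 := by
      by_contra hne
      obtain ⟨k, hk⟩ := Nat.exists_eq_succ_of_ne_zero hne
      rw [hk] at hodd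
      simp [pow_succ, Nat.mul_mod] at hodd
    have hempty : ∀ c : H.ConnectedComponent, c = c₀ := by
      intro c
      by_contra hc
      exact (Fintype.card_eq_zero_iff.mp hzero).false ⟨c, hc⟩
    haveI : Nonempty ↥F := ⟨⟨v₁, hv₁⟩⟩
    refine ⟨?_⟩
    intro u v
    have : H.connectedComponentMk u = H.connectedComponentMk v := by
      rw [hempty (H.connectedComponentMk u), hempty (H.connectedComponentMk v)]
    exact SimpleGraph.ConnectedComponent.exact this
  · intro hconn
    have hzero : Fintype.card {c : H.ConnectedComponent // c ≠ c₀} = 0 := by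
      rw [Fintype.card_eq_zero_iff]
      constructor
      rintro ⟨c, hc⟩
      obtain ⟨u, hu⟩ := c.exists_rep
      apply hc
      rw [← hu]
      exact SimpleGraph.ConnectedComponent.sound (hconn.preconnected u ⟨v₁, hv₁⟩)
    simp [hzero]
end

section
/- Let w : U → {1,...,N} be a weight function on finite set U and F ⊆ 2^U. For fixed distinct S₁, S₂ ∈ F and u ∈ S₁ \ S₂ (or u ∈ S₂ \ S₁): conditioned on the weights of all elements other than u, there is at most one value of w(u) for which both S₁ and S₂ attain the minimum weight in F. Hence the probability that u is 'ambiguous' (belongs to some minimum-weight set and is absent from another) is at most 1/N. -/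
lemma stmt18_key {U : Type*} [Fintype U] [DecidableEq U] {N : ℕ}
    (𝓕 : Finset (Finset U)) (u : U)
    (w w' : U → Fin N) (hww' : ∀ x, x ≠ u → w x = w' x)
    (S T : Finset U) (hS : S ∈ 𝓕) (hT : T ∈ 𝓕) (huS : u ∈ S) (huT : u ∉ T)
    (hSmin : ∀ T' ∈ 𝓕, ∑ x ∈ S, ((w x : ℕ) + 1) ≤ ∑ x ∈ T', ((w x : ℕ) + 1))
    (hTmin : ∀ T' ∈ 𝓕, ∑ x ∈ T, ((w x : ℕ) + 1) ≤ ∑ x ∈ T', ((w x : ℕ) + 1))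
    (S' T' : Finset U) (hS' : S' ∈ 𝓕) (hT' : T' ∈ 𝓕) (huS' : u ∈ S') (huT' : u ∉ T')
    (hS'min : ∀ T'' ∈ 𝓕, ∑ x ∈ S', ((w' x : ℕ) + 1) ≤ ∑ x ∈ T'', ((w' x : ℕ) + 1))
    (hT'min : ∀ T'' ∈ 𝓕, ∑ x ∈ T', ((w' x : ℕ) + 1) ≤ ∑ x ∈ T'', ((w' x : ℕ) + 1)) :
    w u = w' u := by
  have eqsum : ∀ A : Finset U, u ∉ A →
      ∑ x ∈ A, ((w x : ℕ) + 1) = ∑ x ∈ A, ((w' x : ℕ) + 1) := by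
    intro A hA
    refine Finset.sum_congr rfl fun x hx => ?_
    rw [hww' x (by rintro rfl; exact hA hx)]
  have splitS : ∀ (v : U → Fin N) (A : Finset U), u ∈ A →
      ∑ x ∈ A, ((v x : ℕ) + 1) = ((v u : ℕ) + 1) + ∑ x ∈ A.erase u, ((v x : ℕ) + 1) := by
    intro v A hA
    rw [← Finset.add_sum_erase _ _ hA]
  have eqerase : ∀ A : Finset U,
      ∑ x ∈ A.erase u, ((w x : ℕ) + 1) = ∑ x ∈ A.erase u, ((w' x : ℕ) + 1) :=
    fun A => eqsum _ (Finset.notMem_erase u A)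
  -- all four sets have the same minimum value α
  have hαα' : ∑ x ∈ T, ((w x : ℕ) + 1) = ∑ x ∈ T', ((w' x : ℕ) + 1) := by
    have h1 : ∑ x ∈ T, ((w x : ℕ) + 1) ≤ ∑ x ∈ T', ((w' x : ℕ) + 1) := by
      calc ∑ x ∈ T, ((w x : ℕ) + 1) ≤ ∑ x ∈ T', ((w x : ℕ) + 1) := hTmin T' hT'
        _ = ∑ x ∈ T', ((w' x : ℕ) + 1) := eqsum T' huT'
    have h2 : ∑ x ∈ T', ((w' x : ℕ) + 1) ≤ ∑ x ∈ T, ((w x : ℕ) + 1) := by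
      calc ∑ x ∈ T', ((w' x : ℕ) + 1) ≤ ∑ x ∈ T, ((w' x : ℕ) + 1) := hT'min T hT
        _ = ∑ x ∈ T, ((w x : ℕ) + 1) := (eqsum T huT).symm
    omega
  have hSα : ∑ x ∈ S, ((w x : ℕ) + 1) = ∑ x ∈ T, ((w x : ℕ) + 1) :=
    le_antisymm (hSmin T hT) (hTmin S hS)
  have hS'α : ∑ x ∈ S', ((w' x : ℕ) + 1) = ∑ x ∈ T', ((w' x : ℕ) + 1) :=
    le_antisymm (hS'min T' hT') (hT'min S' hS')
  -- first inequality : w' u ≤ w u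
  have h1 : (w' u : ℕ) ≤ (w u : ℕ) := by
    have hle : ∑ x ∈ S, ((w x : ℕ) + 1) ≤ ∑ x ∈ S', ((w x : ℕ) + 1) := hSmin S' hS'
    rw [splitS w S' huS', eqerase S'] at hle
    rw [hSα, hαα', ← hS'α, splitS w' S' huS'] at hle
    omega
  have h2 : (w u : ℕ) ≤ (w' u : ℕ) := by
    have hle : ∑ x ∈ S', ((w' x : ℕ) + 1) ≤ ∑ x ∈ S, ((w' x : ℕ) + 1) := hS'min S hS
    rw [splitS w' S huS, ← eqerase S] at hle
    rw [hS'α, ← hαα', ← hSα, splitS w S huS] at hle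
    omega
  exact Fin.ext (le_antisymm h2 h1)


/-- Key step of the Isolation Lemma. Weights are modelled by functions `w : U → Fin N`,
the weight of `u` being `(w u) + 1 ∈ {1,…,N}` and `w(S) = Σ_{x∈S} w(x)`.
(1) For distinct `S₁, S₂ ∈ 𝓕` with `u ∈ S₁ \ S₂`: fixing the weights of all elements
other than `u`, there is at most one value of `w(u)` for which both `S₁` and `S₂`
attain the minimum weight in `𝓕`.
(2) Hence the probability that `u` is ambiguous (some minimum-weight member of `𝓕`
contains `u` and another does not) is at most `1/N`. -/
theorem stmt18 {U : Type*} [Fintype U] [DecidableEq U] (N : ℕ) (hN : 0 < N)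
    (𝓕 : Finset (Finset U)) (S₁ S₂ : Finset U)
    (hS₁ : S₁ ∈ 𝓕) (hS₂ : S₂ ∈ 𝓕) (hne : S₁ ≠ S₂)
    (u : U) (hu₁ : u ∈ S₁) (hu₂ : u ∉ S₂) :
    (∀ w w' : U → Fin N, (∀ x, x ≠ u → w x = w' x) →
      ((∀ T ∈ 𝓕, ∑ x ∈ S₁, ((w x : ℕ) + 1) ≤ ∑ x ∈ T, ((w x : ℕ) + 1)) ∧
       (∀ T ∈ 𝓕, ∑ x ∈ S₂, ((w x : ℕ) + 1) ≤ ∑ x ∈ T, ((w x : ℕ) + 1))) →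
      ((∀ T ∈ 𝓕, ∑ x ∈ S₁, ((w' x : ℕ) + 1) ≤ ∑ x ∈ T, ((w' x : ℕ) + 1)) ∧
       (∀ T ∈ 𝓕, ∑ x ∈ S₂, ((w' x : ℕ) + 1) ≤ ∑ x ∈ T, ((w' x : ℕ) + 1))) →
      w u = w' u) ∧
    (Set.ncard {w : U → Fin N | ∃ S T : Finset U, S ∈ 𝓕 ∧ T ∈ 𝓕 ∧
        (∀ T' ∈ 𝓕, ∑ x ∈ S, ((w x : ℕ) + 1) ≤ ∑ x ∈ T', ((w x : ℕ) + 1)) ∧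
        (∀ T' ∈ 𝓕, ∑ x ∈ T, ((w x : ℕ) + 1) ≤ ∑ x ∈ T', ((w x : ℕ) + 1)) ∧
        u ∈ S ∧ u ∉ T} : ℝ) / (N ^ Fintype.card U) ≤ 1 / N := by
  constructor
  · rintro w w' hww' ⟨h1, h2⟩ ⟨h1', h2'⟩
    exact stmt18_key 𝓕 u w w' hww' S₁ S₂ hS₁ hS₂ hu₁ hu₂ h1 h2 S₁ S₂ hS₁ hS₂ hu₁ hu₂ h1' h2'
  · set A : Set (U → Fin N) := {w : U → Fin N | ∃ S T : Finset U, S ∈ 𝓕 ∧ T ∈ 𝓕 ∧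
        (∀ T' ∈ 𝓕, ∑ x ∈ S, ((w x : ℕ) + 1) ≤ ∑ x ∈ T', ((w x : ℕ) + 1)) ∧
        (∀ T' ∈ 𝓕, ∑ x ∈ T, ((w x : ℕ) + 1) ≤ ∑ x ∈ T', ((w x : ℕ) + 1)) ∧
        u ∈ S ∧ u ∉ T} with hA
    have hNU : 0 < Fintype.card U := Fintype.card_pos_iff.mpr ⟨u⟩
    -- restriction map
    set φ : (U → Fin N) → ({x : U // x ≠ u} → Fin N) := fun w x => w x with hφ
    have hinj : Set.InjOn φ A := by
      rintro w ⟨S, T, hS, hT, hSm, hTm, huS, huT⟩ w' ⟨S', T', hS', hT', hS'm, hT'm, huS', huT'⟩ h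
      have hww' : ∀ x, x ≠ u → w x = w' x := fun x hx => congrFun h ⟨x, hx⟩
      funext x
      by_cases hx : x = u
      · subst hx
        exact stmt18_key 𝓕 x w w' hww' S T hS hT huS huT hSm hTm S' T' hS' hT' huS' huT'
          hS'm hT'm
      · exact hww' x hx
    have hcard : A.ncard ≤ N ^ (Fintype.card U - 1) := by
      have h1 : A.ncard = (φ '' A).ncard := (Set.ncard_image_of_injOn hinj).symm
      have h2 : (φ '' A).ncard ≤ (Set.univ : Set ({x : U // x ≠ u} → Fin N)).ncard :=
        Set.ncard_le_ncard (Set.subset_univ _) Set.finite_univ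
      have h3 : (Set.univ : Set ({x : U // x ≠ u} → Fin N)).ncard
          = N ^ (Fintype.card U - 1) := by
        rw [Set.ncard_univ, Nat.card_eq_fintype_card, Fintype.card_fun, Fintype.card_fin]
        congr 1
        simp [Fintype.card_subtype_compl, Fintype.card_subtype_eq]
      omega
    have hmul : A.ncard * N ≤ N ^ Fintype.card U := by
      calc A.ncard * N ≤ N ^ (Fintype.card U - 1) * N := by
            exact Nat.mul_le_mul_right _ hcard
        _ = N ^ (Fintype.card U - 1 + 1) := (pow_succ N _).symm
        _ = N ^ Fintype.card U := by congr 1; omega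
    rw [div_le_div_iff₀ (by positivity) (by positivity)]
    calc (A.ncard : ℝ) * N = ((A.ncard * N : ℕ) : ℝ) := by push_cast; ring
      _ ≤ ((N ^ Fintype.card U : ℕ) : ℝ) := Nat.cast_le.mpr hmul
      _ = 1 * (N ^ Fintype.card U : ℝ) := by push_cast; ring
end
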